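/- Let m, n be positive integers, k₁,…,k_m, l₁,…,lₙ positive integers, and j an integer with 1 ≤ j ≤ m. Then z_{k₁}z_{k₂}⋯z_{k_m} ⋆_t z_{l₁}z_{l₂}⋯z_{lₙ} = Σ_{i=0}^{n} [ (z_{k₁}⋯z_{k_{j−1}} ⋆_o z_{l₁}⋯z_{l_i}) z_{k_j} + (z_{k₁}⋯z_{k_{j−1}} ⋆_o z_{l₁}⋯z_{l_{i−1}}) { (1−2t) z_{k_j+l_i} + (1 − δ_{i,n} δ_{j,m}) (t²−t) x^{k_j+l_i} } ] (z_{k_{j+1}}⋯z_{k_m} ⋆_t z_{l_{i+1}}⋯z_{lₙ}), with the conventions that an empty product of letters z_{k_i}⋯z_{k_{i−1}} equals 1, that z_{k_i}⋯z_{k_{i−2}} equals 0 (so the second bracketed summand vanishes for i = 0), and δ_{i,j} is the Kronecker delta. -/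
import Mathlib


/- ℍ_t = ℚ[t]⟨x,y⟩, z_k = x^{k-1}y, and the t-stuffle product ⋆_t on the word
basis of ℍ¹_t (a ℚ[t]-bilinear map is determined by its values on words). -/

noncomputable section

open Polynomial Finset

abbrev R : Type := Polynomial ℚ
abbrev A : Type := FreeAlgebra R Bool

def Xg : A := FreeAlgebra.ι R false
def Yg : A := FreeAlgebra.ι R true
def tp : R := Polynomial.X

/-- `z k = x^(k-1) y`. -/
def z (k : ℕ) : A := Xg ^ (k - 1) * Yg

/-- The word `z_{k₁} ⋯ z_{kₙ}`. -/
def zw (w : List ℕ) : A := (w.map z).prod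

/-- The t-stuffle product, given on the word basis of ℍ¹_t. -/
def tst : List ℕ → List ℕ → A
  | [], w => zw w
  | k :: w₁, [] => zw (k :: w₁)
  | k :: w₁, l :: w₂ =>
      z k * tst w₁ (l :: w₂) + z l * tst (k :: w₁) w₂
        + (1 - 2 * tp) • (z (k + l) * tst w₁ w₂)
        + (if w₁ = [] ∧ w₂ = [] then (0 : R) else tp ^ 2 - tp) • (Xg ^ (k + l) * tst w₁ w₂)
  termination_by w₁ w₂ => w₁.length + w₂.length

/-- The auxiliary product `⋆_o`, given on the word basis. -/
def ost : List ℕ → List ℕ → A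
  | [], w => zw w
  | k :: w₁, [] => zw (k :: w₁)
  | k :: w₁, l :: w₂ =>
      z k * ost w₁ (l :: w₂) + z l * ost (k :: w₁) w₂
        + ((1 - 2 * tp) • z (k + l) + (tp ^ 2 - tp) • (Xg ^ (k + l) : A))
            * ost w₁ w₂
  termination_by w₁ w₂ => w₁.length + w₂.length

-- basic lemmas
lemma zw_nil : zw [] = 1 := rfl
lemma zw_cons (k : ℕ) (w : List ℕ) : zw (k :: w) = z k * zw w := by
  simp [zw]
lemma zw_append (u v : List ℕ) : zw (u ++ v) = zw u * zw v := by
  simp [zw]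

lemma tst_nil_left (w : List ℕ) : tst [] w = zw w := by simp [tst]
lemma tst_nil_right (w : List ℕ) : tst w [] = zw w := by
  cases w <;> simp [tst]
lemma tst_cons_cons (k l : ℕ) (w₁ w₂ : List ℕ) :
    tst (k :: w₁) (l :: w₂) =
      z k * tst w₁ (l :: w₂) + z l * tst (k :: w₁) w₂
        + (1 - 2 * tp) • (z (k + l) * tst w₁ w₂)
        + (if w₁ = [] ∧ w₂ = [] then (0 : R) else tp ^ 2 - tp) • (Xg ^ (k + l) * tst w₁ w₂) := by
  rw [tst]

lemma ost_nil_left (w : List ℕ) : ost [] w = zw w := by simp [ost]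
lemma ost_nil_right (w : List ℕ) : ost w [] = zw w := by
  cases w <;> simp [ost]
lemma ost_cons_cons (k l : ℕ) (w₁ w₂ : List ℕ) :
    ost (k :: w₁) (l :: w₂) =
      z k * ost w₁ (l :: w₂) + z l * ost (k :: w₁) w₂
        + ((1 - 2 * tp) • z (k + l) + (tp ^ 2 - tp) • (Xg ^ (k + l) : A)) * ost w₁ w₂ := by
  rw [ost]

def Cf (a b : ℕ) : A := (1 - 2*tp) • z (a + b) + (tp^2 - tp) • (Xg ^ (a + b) : A)

lemma ost_cons_cons' (k l : ℕ) (w₁ w₂ : List ℕ) :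
    ost (k :: w₁) (l :: w₂) =
      z k * ost w₁ (l :: w₂) + z l * ost (k :: w₁) w₂ + Cf k l * ost w₁ w₂ :=
  ost_cons_cons k l w₁ w₂

/-- summand of expansion -/
def Ssum (u : List ℕ) (k : ℕ) (v : List ℕ) (i : ℕ) : A :=
  (ost u (v.take i) * z k +
    (if i = 0 then (0:A) else ost u (v.take (i-1)) * Cf k (v.getD (i-1) 0)))
  * zw (v.drop i)

lemma L3 : ∀ (u : List ℕ) (k : ℕ) (v : List ℕ),
    ost (u ++ [k]) v = ∑ i ∈ range (v.length + 1), Ssum u k v i := by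
  intro u
  induction u with
  | nil =>
    intro k v
    induction v with
    | nil => simp [Ssum, ost_nil_right, ost_nil_left, zw_cons, zw_nil]
    | cons l v' ih =>
      rw [List.nil_append] at ih ⊢
      rw [ost_cons_cons', List.length_cons, Finset.sum_range_succ']
      have key : ∀ i ∈ range (v'.length + 1),
          Ssum [] k (l :: v') (i+1)
          = z l * Ssum [] k v' i + (if i = 0 then Cf k l * zw v' else 0) := by
        rintro (_ | i) hi
        · simp [Ssum, ost_nil_left, zw_cons, zw_nil, mul_add, add_mul, mul_assoc]
        · simp [Ssum, ost_nil_left, zw_cons, zw_nil, mul_add, add_mul, mul_assoc]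
      rw [Finset.sum_congr rfl key, Finset.sum_add_distrib,
        Finset.sum_ite_eq' (range (v'.length + 1)) 0, ← Finset.mul_sum, ← ih]
      simp [Ssum, ost_nil_left, ost_nil_right, zw_cons, zw_nil, mul_assoc]
      abel
  | cons k' u' ihu =>
    intro k v
    induction v with
    | nil =>
      simp [Ssum, ost_nil_right, zw_append, zw_cons, zw_nil, mul_assoc]
    | cons l v' ihv =>
      simp only [List.cons_append] at ihv ⊢
      rw [ost_cons_cons', ihu k (l :: v'), ihv, ihu k v', List.length_cons]
      have key : ∀ i ∈ range (v'.length + 1),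
          Ssum (k' :: u') k (l :: v') (i+1)
          = z k' * Ssum u' k (l :: v') (i+1) + z l * Ssum (k' :: u') k v' i
            + Cf k' l * Ssum u' k v' i := by
        rintro (_ | i) hi
        · simp only [Ssum, List.take_succ_cons, List.take_zero, List.getD_cons_zero,
            List.drop_succ_cons, List.drop_zero, Nat.add_sub_cancel, List.take_nil]
          rw [ost_cons_cons']
          simp [ost_nil_right, zw_cons, mul_add, add_mul, mul_assoc]
          abel
        · simp only [Ssum, List.take_succ_cons, List.getD_cons_succ,
            List.drop_succ_cons, Nat.add_sub_cancel, Nat.succ_ne_zero, if_false,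
            show i+1+1-1 = i+1 from rfl, show i+1-1 = i from rfl]
          rw [ost_cons_cons', ost_cons_cons']
          simp only [mul_add, add_mul, mul_assoc, if_false, Nat.succ_ne_zero]
          abel
      have h0 : Ssum (k' :: u') k (l :: v') 0 = z k' * Ssum u' k (l :: v') 0 := by
        simp [Ssum, ost_nil_right, zw_cons, mul_assoc, add_mul]
      rw [Finset.sum_range_succ' (fun i => Ssum u' k (l :: v') i),
        Finset.sum_range_succ' (fun i => Ssum (k' :: u') k (l :: v') i)]
      rw [Finset.sum_congr rfl key, h0]
      simp only [Finset.sum_add_distrib, ← Finset.mul_sum, mul_add]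
      abel
lemma L1 (k : ℕ) (w₁ : List ℕ) : ∀ (v : List ℕ),
    tst (k :: w₁) v = ∑ i ∈ range (v.length + 1),
      (zw (v.take i) * z k +
        (if i = 0 then (0:A) else zw (v.take (i-1)) *
          ((1 - 2*tp) • z (k + v.getD (i-1) 0) +
           (if i = v.length ∧ w₁ = [] then (0:R) else tp^2 - tp) •
             (Xg ^ (k + v.getD (i-1) 0) : A))))
      * tst w₁ (v.drop i) := by
  intro v
  induction v with
  | nil => simp [tst_nil_right, zw_cons, zw_nil]
  | cons l v' ih =>
    rw [tst_cons_cons, List.length_cons, Finset.sum_range_succ']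
    have key : ∀ i ∈ range (v'.length + 1),
        (zw ((l :: v').take (i+1)) * z k +
          (if i + 1 = 0 then (0:A) else zw ((l :: v').take (i+1-1)) *
            ((1 - 2*tp) • z (k + (l :: v').getD (i+1-1) 0) +
             (if i + 1 = v'.length + 1 ∧ w₁ = [] then (0:R) else tp^2 - tp) •
               (Xg ^ (k + (l :: v').getD (i+1-1) 0) : A))))
          * tst w₁ ((l :: v').drop (i+1))
        = z l * ((zw (v'.take i) * z k +
            (if i = 0 then (0:A) else zw (v'.take (i-1)) *
              ((1 - 2*tp) • z (k + v'.getD (i-1) 0) +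
               (if i = v'.length ∧ w₁ = [] then (0:R) else tp^2 - tp) •
                 (Xg ^ (k + v'.getD (i-1) 0) : A))))
            * tst w₁ (v'.drop i))
          + (if i = 0 then ((1 - 2*tp) • z (k + l) +
              (if w₁ = [] ∧ v' = [] then (0:R) else tp^2 - tp) •
                (Xg ^ (k + l) : A)) * tst w₁ v' else 0) := by
      rintro (_ | i) hi
      · have hc : (0 + 1 = v'.length + 1 ∧ w₁ = []) = (w₁ = [] ∧ v' = []) := by
          rw [eq_iff_iff]
          constructor
          · rintro ⟨h1, h2⟩; exact ⟨h2, List.length_eq_zero_iff.mp (by omega)⟩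
          · rintro ⟨h1, h2⟩; exact ⟨by simp [h2], h1⟩
        simp only [hc]
        simp [zw_cons, zw_nil, mul_add, add_mul, mul_assoc]
      · have hc : (i + 1 + 1 = v'.length + 1 ∧ w₁ = []) = (i + 1 = v'.length ∧ w₁ = []) := by
          simp
        simp only [hc]
        simp [zw_cons, mul_add, add_mul, mul_assoc]
    rw [Finset.sum_congr rfl key]
    rw [Finset.sum_add_distrib, Finset.sum_ite_eq' (range (v'.length + 1)) 0]
    rw [← Finset.mul_sum, ← ih]
    simp only [List.take_zero, zw_nil, one_mul, if_pos rfl, add_zero, List.drop_zero,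
      Finset.mem_range, Nat.zero_lt_succ, if_true]
    simp only [smul_mul_assoc, add_mul, mul_add]
    by_cases hw : w₁ = [] <;> by_cases hv : v' = [] <;>
      simp [hw, hv, and_comm] <;> abel

lemma getD_drop' (l : List ℕ) (i t : ℕ) (h : i + t < l.length) :
    (l.drop i).getD t 0 = l.getD (i+t) 0 := by
  rw [List.getD_eq_getElem _ _ (by simp; omega), List.getD_eq_getElem _ _ h]; simp

lemma take_take' (l : List ℕ) (q i : ℕ) (h : i ≤ q) : (l.take q).take i = l.take i := by
  rw [List.take_take, min_eq_left h]

lemma getD_take' (l : List ℕ) (q i : ℕ) (h : i < q) (h2 : i < l.length) :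
    (l.take q).getD i 0 = l.getD i 0 := by
  rw [List.getD_eq_getElem _ _ (by simp; omega), List.getD_eq_getElem _ _ h2]
  simp [List.getElem_take]

lemma take_concat' (w : List ℕ) (j : ℕ) (h : j < w.length) :
    w.take (j+1) = w.take j ++ [w.getD j 0] := by
  rw [List.take_succ]
  simp [List.getElem?_eq_getElem h, List.getD_eq_getElem _ _ h]

/-- L4: sliced version of L3. -/
lemma L4 (u : List ℕ) (a : ℕ) (ls : List ℕ) (q : ℕ) (hq : q ≤ ls.length) :
    ost (u ++ [a]) (ls.take q) =
      ∑ i ∈ range (q+1),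
        (ost u (ls.take i) * z a +
          (if i = 0 then (0:A) else ost u (ls.take (i-1)) * Cf a (ls.getD (i-1) 0)))
        * zw ((ls.drop i).take (q-i)) := by
  rw [L3 u a (ls.take q), List.length_take, min_eq_left hq]
  refine Finset.sum_congr rfl ?_
  intro i hi
  rw [Finset.mem_range] at hi
  have hiq : i ≤ q := by omega
  rw [Ssum, take_take' _ _ _ hiq, List.drop_take]
  rcases i with _ | i'
  · simp
  · have h1 : i' < q := by omega
    rw [if_neg (Nat.succ_ne_zero i'), if_neg (Nat.succ_ne_zero i')]
    rw [Nat.add_sub_cancel, take_take' _ _ _ (by omega), getD_take' _ _ _ h1 (by omega)]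

lemma Cf_eq (a b : ℕ) :
    (1 - 2*tp) • z (a + b) + (tp^2 - tp) • (Xg ^ (a + b) : A) = Cf a b := rfl

def Af (u : List ℕ) (a : ℕ) (ls : List ℕ) (i : ℕ) : A :=
  ost u (ls.take i) * z a +
    (if i = 0 then (0:A) else ost u (ls.take (i-1)) * Cf a (ls.getD (i-1) 0))

lemma Af_eq (u : List ℕ) (a : ℕ) (ls : List ℕ) (i : ℕ) :
    ost u (ls.take i) * z a +
      (if i = 0 then (0:A) else ost u (ls.take (i-1)) * Cf a (ls.getD (i-1) 0))
    = Af u a ls i := rfl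

lemma L4' (u : List ℕ) (a : ℕ) (ls : List ℕ) (q : ℕ) (hq : q ≤ ls.length) :
    ost (u ++ [a]) (ls.take q) =
      ∑ i ∈ range (q+1), Af u a ls i * zw ((ls.drop i).take (q-i)) := by
  rw [L4 u a ls q hq]
  exact Finset.sum_congr rfl fun i _ => by rw [Af_eq]

theorem main_aux (j' : ℕ) : ∀ (ks ls : List ℕ), j' + 1 ≤ ks.length →
    tst ks ls = ∑ i ∈ range (ls.length + 1),
      (ost (ks.take j') (ls.take i) * z (ks.getD j' 0)
        + (if i = 0 then (0 : A)
           else ost (ks.take j') (ls.take (i - 1)) *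
             ((1 - 2 * tp) • z (ks.getD j' 0 + ls.getD (i - 1) 0)
              + (if i = ls.length ∧ j' + 1 = ks.length then (0 : R) else tp ^ 2 - tp) •
                  (Xg ^ (ks.getD j' 0 + ls.getD (i - 1) 0) : A))))
      * tst (ks.drop (j'+1)) (ls.drop i) := by
  induction j' with
  | zero =>
    intro ks ls h
    obtain ⟨k, w₁, rfl⟩ : ∃ k w₁, ks = k :: w₁ := by
      cases ks
      · simp at h
      · exact ⟨_, _, rfl⟩
    rw [L1 k w₁ ls]
    refine Finset.sum_congr rfl ?_
    intro i hi
    have hcond : (i = ls.length ∧ w₁ = []) = (i = ls.length ∧ 0 + 1 = (k :: w₁).length) := by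
      rw [eq_iff_iff]
      constructor
      · rintro ⟨h1, h2⟩; exact ⟨h1, by simp [h2]⟩
      · rintro ⟨h1, h2⟩
        refine ⟨h1, ?_⟩
        simp only [List.length_cons] at h2
        exact List.length_eq_zero_iff.mp (by omega)
    simp only [List.take_zero, ost_nil_left, List.getD_cons_zero, List.drop_succ_cons,
      List.drop_zero, hcond]
  | succ j' ih =>
    intro ks ls h
    have hj2 : j' + 1 < ks.length := by omega
    have hIH := ih ks ls (by omega)
    have hfalse : (j' + 1 = ks.length) = False := by
      rw [eq_iff_iff, iff_false]; omega
    simp only [hfalse, and_false, if_false] at hIH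
    simp only [Cf_eq, Af_eq] at hIH
    rw [hIH]
    have step2 : ∀ i ∈ range (ls.length + 1),
        Af (ks.take j') (ks.getD j' 0) ls i * tst (ks.drop (j'+1)) (ls.drop i)
        = ∑ q ∈ Ico i (ls.length + 1), Af (ks.take j') (ks.getD j' 0) ls i *
            ((zw ((ls.drop i).take (q-i)) * z (ks.getD (j'+1) 0) +
              (if q - i = 0 then (0:A) else zw ((ls.drop i).take (q-i-1)) *
                ((1 - 2 * tp) • z (ks.getD (j'+1) 0 + ls.getD (q-1) 0)
                 + (if q = ls.length ∧ j' + 1 + 1 = ks.length then (0 : R) else tp ^ 2 - tp) •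
                     (Xg ^ (ks.getD (j'+1) 0 + ls.getD (q-1) 0) : A)))) *
             tst (ks.drop (j'+1+1)) (ls.drop q)) := by
      intro i hi
      rw [Finset.mem_range] at hi
      rw [show ks.drop (j'+1) = ks.getD (j'+1) 0 :: ks.drop (j'+1+1) from by
        rw [List.drop_eq_getElem_cons hj2, List.getD_eq_getElem _ _ hj2]]
      rw [L1, Finset.sum_Ico_eq_sum_range, Finset.mul_sum]
      rw [show ls.length + 1 - i = (ls.drop i).length + 1 from by
        rw [List.length_drop]; omega]
      refine Finset.sum_congr rfl ?_
      intro p hp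
      rw [Finset.mem_range, List.length_drop] at hp
      congr 1
      rw [show i + p - i = p from by omega, List.drop_drop]
      rcases p with _ | p'
      · simp
      · have hgd : (List.drop i ls).getD (p' + 1 - 1) 0 = ls.getD (i + (p' + 1) - 1) 0 := by
          rw [show p' + 1 - 1 = p' from rfl,
            show i + (p' + 1) - 1 = i + p' from by omega]
          exact getD_drop' ls i p' (by omega)
        have hcond : (p' + 1 = (List.drop i ls).length ∧ List.drop (j'+1+1) ks = [])
            = (i + (p'+1) = ls.length ∧ j'+1+1 = ks.length) := by
          rw [eq_iff_iff, List.length_drop, List.drop_eq_nil_iff]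
          constructor <;> (rintro ⟨h1, h2⟩; exact ⟨by omega, by omega⟩)
        rw [hgd]
        simp only [hcond]
    rw [Finset.sum_congr rfl step2]
    rw [Finset.sum_comm' (s := range (ls.length + 1)) (t := fun i => Ico i (ls.length + 1))
      (s' := fun q => range (q + 1)) (t' := range (ls.length + 1))
      (by intro x y; rw [Finset.mem_range, Finset.mem_Ico, Finset.mem_range, Finset.mem_range]; omega)]
    refine Finset.sum_congr rfl ?_
    intro q hq
    rw [Finset.mem_range] at hq
    have expand : ∀ i ∈ range (q + 1),
        Af (ks.take j') (ks.getD j' 0) ls i *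
          ((zw ((ls.drop i).take (q-i)) * z (ks.getD (j'+1) 0) +
            (if q - i = 0 then (0:A) else zw ((ls.drop i).take (q-i-1)) *
              ((1 - 2 * tp) • z (ks.getD (j'+1) 0 + ls.getD (q-1) 0)
               + (if q = ls.length ∧ j' + 1 + 1 = ks.length then (0 : R) else tp ^ 2 - tp) •
                   (Xg ^ (ks.getD (j'+1) 0 + ls.getD (q-1) 0) : A)))) *
           tst (ks.drop (j'+1+1)) (ls.drop q))
        = (Af (ks.take j') (ks.getD j' 0) ls i * zw ((ls.drop i).take (q-i))) *
            (z (ks.getD (j'+1) 0) * tst (ks.drop (j'+1+1)) (ls.drop q))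
          + (if i = q then (0:A) else
              (Af (ks.take j') (ks.getD j' 0) ls i * zw ((ls.drop i).take (q-1-i))) *
                (((1 - 2 * tp) • z (ks.getD (j'+1) 0 + ls.getD (q-1) 0)
                  + (if q = ls.length ∧ j' + 1 + 1 = ks.length then (0 : R) else tp ^ 2 - tp) •
                      (Xg ^ (ks.getD (j'+1) 0 + ls.getD (q-1) 0) : A)) *
                 tst (ks.drop (j'+1+1)) (ls.drop q))) := by
      intro i hi
      rw [Finset.mem_range] at hi
      by_cases hiq : i = q
      · rw [if_pos (by omega), if_pos hiq]
        simp [mul_add, add_mul, mul_assoc]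
      · rw [if_neg (by omega), if_neg hiq, show q - i - 1 = q - 1 - i from by omega]
        simp [mul_add, add_mul, mul_assoc]
    rw [Finset.sum_congr rfl expand, Finset.sum_add_distrib, ← Finset.sum_mul,
      ← L4' (ks.take j') (ks.getD j' 0) ls q (by omega),
      ← take_concat' ks j' (by omega)]
    by_cases hq0 : q = 0
    · subst hq0
      simp [mul_assoc]
    · obtain ⟨q', rfl⟩ : ∃ q', q = q' + 1 := ⟨q - 1, by omega⟩
      rw [Finset.sum_range_succ, if_pos rfl, add_zero]
      rw [Finset.sum_congr rfl (fun i hi => by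
        rw [if_neg (by rw [Finset.mem_range] at hi; omega)])]
      rw [show q' + 1 - 1 = q' from rfl, ← Finset.sum_mul,
        ← L4' (ks.take j') (ks.getD j' 0) ls q' (by omega),
        ← take_concat' ks j' (by omega)]
      rw [if_neg (Nat.succ_ne_zero q')]
      simp [mul_add, add_mul, mul_assoc]


/-- Proposition 2: the recursive formula for the t-stuffle product.
Here `ks = [k₁, …, k_m]` and `ls = [l₁, …, lₙ]` with all entries positive, and
`1 ≤ j ≤ m`.  The `i = 0` case of the second bracketed summand vanishes by the
convention `z_{k_i}⋯z_{k_{i-2}} = 0`. -/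
theorem recursive_formula (m n : ℕ) (hm : 1 ≤ m) (hn : 1 ≤ n)
    (ks ls : List ℕ) (hkm : ks.length = m) (hln : ls.length = n)
    (hks : ∀ k ∈ ks, 1 ≤ k) (hls : ∀ l ∈ ls, 1 ≤ l)
    (j : ℕ) (hj1 : 1 ≤ j) (hjm : j ≤ m) :
    tst ks ls =
      ∑ i ∈ Finset.range (n + 1),
        (ost (ks.take (j - 1)) (ls.take i) * z (ks.getD (j - 1) 0)
          + (if i = 0 then (0 : A)
             else ost (ks.take (j - 1)) (ls.take (i - 1)) *
               ((1 - 2 * tp) • z (ks.getD (j - 1) 0 + ls.getD (i - 1) 0)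
                + (if i = n ∧ j = m then (0 : R) else tp ^ 2 - tp) •
                    (Xg ^ (ks.getD (j - 1) 0 + ls.getD (i - 1) 0) : A))))
        * tst (ks.drop j) (ls.drop i) := by
  subst hkm hln
  obtain ⟨j', rfl⟩ : ∃ j', j = j' + 1 := ⟨j - 1, by omega⟩
  simp only [Nat.add_sub_cancel]
  exact main_aux j' ks ls (by omega)
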